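/- If Q : Δ(S) × A → ℝ is convex in the belief, then for every belief b ∈ Δ(S) and every a ∈ A: H_POMDP Q(b,a) ≤ H_OTIB Q(b,a). -/

import Mathlib

open Finset
open scoped Classical

set_option linter.unusedSectionVars false

/-- A belief (probability distribution) over a finite state space `S`. -/
structure Belief (S : Type*) [Fintype S] where
  val : S → ℝ
  nonneg : ∀ s, 0 ≤ val s
  sum_one : ∑ s, val s = 1

/-- The convex combination `l • b₁ + (1-l) • b₂` of two beliefs. -/
noncomputable def Belief.mix {S : Type*} [Fintype S] (b₁ b₂ : Belief S) (l : ℝ)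
    (h0 : 0 ≤ l) (h1 : l ≤ 1) : Belief S where
  val s := l * b₁.val s + (1 - l) * b₂.val s
  nonneg s := add_nonneg (mul_nonneg h0 (b₁.nonneg s))
    (mul_nonneg (by linarith) (b₂.nonneg s))
  sum_one := by
    rw [Finset.sum_add_distrib, ← Finset.mul_sum, ← Finset.mul_sum, b₁.sum_one, b₂.sum_one]
    ring

/-- `Q : Δ(S) × A → ℝ` is convex in the belief. -/
def ConvexInBelief {S A : Type*} [Fintype S] (Q : Belief S → A → ℝ) : Prop :=
  ∀ (a : A) (b₁ b₂ : Belief S) (l : ℝ) (h0 : 0 ≤ l) (h1 : l ≤ 1),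
    Q (Belief.mix b₁ b₂ l h0 h1) a ≤ l * Q b₁ a + (1 - l) * Q b₂ a

/-- A finite POMDP: transition function `T s a s' = T(s'|s,a)`, observation function
`Z a s' o = Ω(o|a,s')`, rewards `R`, discount `γ ∈ (0,1)`. -/
structure POMDP (S A O : Type*) [Fintype S] [Fintype A] [Fintype O] where
  T : S → A → S → ℝ
  T_nonneg : ∀ s a s', 0 ≤ T s a s'
  T_sum_one : ∀ s a, ∑ s', T s a s' = 1
  Z : A → S → O → ℝ
  Z_nonneg : ∀ a s' o, 0 ≤ Z a s' o
  Z_sum_one : ∀ a s', ∑ o, Z a s' o = 1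
  R : S → A → ℝ
  γ : ℝ
  γ_pos : 0 < γ
  γ_lt_one : γ < 1

namespace POMDP

variable {S A O : Type*} [Fintype S] [Fintype A] [Fintype O] [Nonempty S] [Nonempty A]
  [Nonempty O]
variable (M : POMDP S A O)

/-- `Pr(s',o|s,a)` -/
def prSO (s : S) (a : A) (s' : S) (o : O) : ℝ := M.Z a s' o * M.T s a s'

lemma prSO_nonneg (s : S) (a : A) (s' : S) (o : O) : 0 ≤ M.prSO s a s' o :=
  mul_nonneg (M.Z_nonneg a s' o) (M.T_nonneg s a s')

/-- `Pr(o|s,a)` -/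
def prO (s : S) (a : A) (o : O) : ℝ := ∑ s', M.prSO s a s' o

/-- `Pr(s',o|b,a)` -/
def bprSO (b : Belief S) (a : A) (s' : S) (o : O) : ℝ := ∑ s, b.val s * M.prSO s a s' o

lemma bprSO_nonneg (b : Belief S) (a : A) (s' : S) (o : O) : 0 ≤ M.bprSO b a s' o :=
  Finset.sum_nonneg fun s _ => mul_nonneg (b.nonneg s) (M.prSO_nonneg s a s' o)

/-- `Pr(o|b,a)` -/
def bprO (b : Belief S) (a : A) (o : O) : ℝ := ∑ s', M.bprSO b a s' o

/-- The unit belief `δ_s`. -/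
noncomputable def unit (s : S) : Belief S where
  val s' := if s' = s then 1 else 0
  nonneg s' := by by_cases h : s' = s <;> simp [h]
  sum_one := by simp

/-- The posterior belief `b_{b,a,o}`, defined when `Pr(o|b,a) > 0`. -/
noncomputable def post (b : Belief S) (a : A) (o : O) (h : 0 < M.bprO b a o) : Belief S where
  val s' := M.bprSO b a s' o / M.bprO b a o
  nonneg s' := div_nonneg (M.bprSO_nonneg b a s' o) h.le
  sum_one := by
    rw [← Finset.sum_div]
    exact div_self (ne_of_gt h)

/-- The one-step belief `b_{s,a,o} = b_{δ_s,a,o}`, defined when `Pr(o|s,a) > 0`. -/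
noncomputable def osb (s : S) (a : A) (o : O) (h : 0 < M.prO s a o) : Belief S where
  val s' := M.prSO s a s' o / M.prO s a o
  nonneg s' := div_nonneg (M.prSO_nonneg s a s' o) h.le
  sum_one := by
    unfold prO
    rw [← Finset.sum_div]
    exact div_self (ne_of_gt h)

/-- Expected reward `R(b,a)`. -/
noncomputable def expR (b : Belief S) (a : A) : ℝ := ∑ s, b.val s * M.R s a

/-- The fast informed bound operator `H_FIB`. -/
noncomputable def HFIB (Q : Belief S → A → ℝ) (b : Belief S) (a : A) : ℝ :=
  M.expR b a + M.γ * ∑ o, Finset.univ.sup' Finset.univ_nonempty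
    (fun a' => ∑ s', M.bprSO b a s' o * Q (unit s') a')

/-- The tighter informed bound operator `H_TIB`. -/
noncomputable def HTIB (Q : Belief S → A → ℝ) (b : Belief S) (a : A) : ℝ :=
  M.expR b a + M.γ * ∑ o, Finset.univ.sup' Finset.univ_nonempty
    (fun a' => ∑ s, if h : 0 < M.prO s a o then
      b.val s * M.prO s a o * Q (M.osb s a o h) a' else 0)

/-- The optimal Bellman operator `H_POMDP`. -/
noncomputable def HPOMDP (Q : Belief S → A → ℝ) (b : Belief S) (a : A) : ℝ :=
  M.expR b a + M.γ * ∑ o, if h : 0 < M.bprO b a o then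
    M.bprO b a o * Finset.univ.sup' Finset.univ_nonempty (fun a' => Q (M.post b a o h) a')
  else 0

/-- Index type for the family `B_SAO`: `none` indexes the initial belief `b₀`,
`some (s,a,o)` (with `Pr(o|s,a) > 0`) indexes the one-step belief `b_{s,a,o}`. -/
abbrev OSIdx : Type _ := Option {x : S × A × O // 0 < M.prO x.1 x.2.1 x.2.2}

/-- The member of the family `B_SAO` (with initial belief `b₀`) at a given index. -/
noncomputable def member (b₀ : Belief S) : M.OSIdx → Belief S
  | none => b₀
  | some x => M.osb x.1.1 x.1.2.1 x.1.2.2 x.2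

/-- `w` is a weight function for the belief `tgt` over the family `B_SAO`. -/
def IsWeight (b₀ : Belief S) (tgt : Belief S) (w : M.OSIdx → ℝ) : Prop :=
  (∀ i, 0 ≤ w i) ∧ ∀ s, ∑ i, w i * (M.member b₀ i).val s = tgt.val s

/-- The optimized tighter informed bound operator `H_OTIB`. -/
noncomputable def HOTIB (b₀ : Belief S) (Q : Belief S → A → ℝ) (b : Belief S) (a : A) : ℝ :=
  M.expR b a + M.γ * ∑ o, if h : 0 < M.bprO b a o then
    Finset.univ.sup' Finset.univ_nonempty (fun a' =>
      M.bprO b a o * ⨅ w : {w : M.OSIdx → ℝ // M.IsWeight b₀ (M.post b a o h) w},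
        ∑ i, (w : M.OSIdx → ℝ) i * Q (M.member b₀ i) a')
  else 0

/-- The operator `H_ŵ` induced by a weight selection `W`. -/
noncomputable def Hsel (b₀ : Belief S)
    (W : ∀ (b : Belief S) (a : A) (o : O), 0 < M.bprO b a o → (M.OSIdx → ℝ))
    (Q : Belief S → A → ℝ) (b : Belief S) (a : A) : ℝ :=
  M.expR b a + M.γ * ∑ o, if h : 0 < M.bprO b a o then
    Finset.univ.sup' Finset.univ_nonempty (fun a' =>
      M.bprO b a o * ∑ i, W b a o h i * Q (M.member b₀ i) a')
  else 0

end POMDP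

/-!
For an observation `o` with `Pr(o|b,a) > 0`, every `w ∈ W_{b,a,o}` expresses the posterior
`b_{b,a,o}` as a combination of members of `B_SAO` with nonnegative weights, which sum to one
because all the beliefs involved do. Jensen's inequality for the convex `Q(·,a')` then gives
`Q(b_{b,a,o},a') ≤ ∑ w(b')·Q(b',a')`; this persists after taking the infimum over the nonempty
`W_{b,a,o}` and the maximum over `a'`. Jensen's inequality itself is Mathlib's, applied to the
extension of `Q(·,a')` by zero from the standard simplex to `S → ℝ`.
-/

namespace Belief

variable {S : Type*} [Fintype S]

noncomputable def extend (f : Belief S → ℝ) (x : S → ℝ) : ℝ :=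
  if hx : x ∈ stdSimplex ℝ S then f ⟨x, hx.1, hx.2⟩ else 0

lemma extend_val (f : Belief S → ℝ) (b : Belief S) : extend f b.val = f b :=
  dif_pos ⟨b.nonneg, b.sum_one⟩

lemma sum_eq_one_of_sum_mul_val_eq {ι : Type*} {t : Finset ι} {w : ι → ℝ} {B : ι → Belief S}
    {b : Belief S} (hb : ∀ s, ∑ i ∈ t, w i * (B i).val s = b.val s) : ∑ i ∈ t, w i = 1 := by
  calc ∑ i ∈ t, w i = ∑ i ∈ t, ∑ s, w i * (B i).val s := by
        simp only [← Finset.mul_sum, Belief.sum_one, mul_one]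
    _ = ∑ s, b.val s := by rw [Finset.sum_comm]; simp only [hb]
    _ = 1 := b.sum_one

end Belief

namespace ConvexInBelief

variable {S A : Type*} [Fintype S] {Q : Belief S → A → ℝ}

lemma convexOn_extend (hQ : ConvexInBelief Q) (a : A) :
    ConvexOn ℝ (stdSimplex ℝ S) (Belief.extend (Q · a)) := by
  refine ⟨convex_stdSimplex ℝ S, ?_⟩
  rintro x ⟨hx0, hx1⟩ y ⟨hy0, hy1⟩ α β hα hβ hαβ
  obtain rfl : β = 1 - α := by linarith
  let b₁ : Belief S := ⟨x, hx0, hx1⟩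
  let b₂ : Belief S := ⟨y, hy0, hy1⟩
  have hmix : α • x + (1 - α) • y = (b₁.mix b₂ α hα (by linarith)).val := rfl
  have h₁ : Belief.extend (Q · a) x = Q b₁ a := Belief.extend_val _ b₁
  have h₂ : Belief.extend (Q · a) y = Q b₂ a := Belief.extend_val _ b₂
  rw [hmix, Belief.extend_val, h₁, h₂]
  exact hQ a b₁ b₂ α hα _

lemma le_sum_mul (hQ : ConvexInBelief Q) (a : A) {ι : Type*} {t : Finset ι} {w : ι → ℝ}
    {B : ι → Belief S} {b : Belief S} (hw : ∀ i ∈ t, 0 ≤ w i)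
    (hb : ∀ s, ∑ i ∈ t, w i * (B i).val s = b.val s) :
    Q b a ≤ ∑ i ∈ t, w i * Q (B i) a := by
  have hcomb : ∑ i ∈ t, w i • (B i).val = b.val := by
    ext s
    simp [Finset.sum_apply, hb]
  have := (convexOn_extend hQ a).map_sum_le hw (Belief.sum_eq_one_of_sum_mul_val_eq hb)
    (fun i _ => ⟨(B i).nonneg, (B i).sum_one⟩)
  simpa only [hcomb, Belief.extend_val, smul_eq_mul] using this

end ConvexInBelief

namespace POMDP

variable {S A O : Type*} [Fintype S] [Fintype A] [Fintype O] [Nonempty S] [Nonempty A]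
  [Nonempty O] (M : POMDP S A O)

lemma prSO_le_prO (s : S) (a : A) (s' : S) (o : O) : M.prSO s a s' o ≤ M.prO s a o :=
  Finset.single_le_sum (fun s'' _ => M.prSO_nonneg s a s'' o) (Finset.mem_univ s')

lemma prO_nonneg (s : S) (a : A) (o : O) : 0 ≤ M.prO s a o :=
  (M.prSO_nonneg s a s o).trans (M.prSO_le_prO s a s o)

/-- The canonical weights `w_{b,a,o}`. -/
noncomputable def canonicalWeight (b : Belief S) (a : A) (o : O) : M.OSIdx → ℝ
  | none => 0
  | some x => if x.1.2 = (a, o) then b.val x.1.1 * M.prO x.1.1 a o / M.bprO b a o else 0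

lemma isWeight_canonicalWeight (b₀ : Belief S) {b : Belief S} {a : A} {o : O}
    (h : 0 < M.bprO b a o) : M.IsWeight b₀ (M.post b a o h) (M.canonicalWeight b a o) := by
  refine ⟨?_, fun s' => ?_⟩
  · rintro (_ | x)
    · exact le_rfl
    · simp only [canonicalWeight]
      split_ifs
      · exact div_nonneg (mul_nonneg (b.nonneg _) (M.prO_nonneg _ _ _)) h.le
      · exact le_rfl
  · let g : S × A × O → ℝ := fun y =>
      if y.2 = (a, o) then b.val y.1 * M.prSO y.1 a s' o / M.bprO b a o else 0
    have hterm : ∀ x : {x : S × A × O // 0 < M.prO x.1 x.2.1 x.2.2},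
        M.canonicalWeight b a o (some x) * (M.member b₀ (some x)).val s' = g x.1 := by
      rintro ⟨⟨s, a₁, o₁⟩, hx⟩
      simp only [canonicalWeight, member, osb, g]
      split_ifs with hao
      · obtain ⟨rfl, rfl⟩ := Prod.ext_iff.mp hao
        field_simp
      · exact zero_mul _
    have hsupp : ∀ y ∈ Finset.univ, g y ≠ 0 → 0 < M.prO y.1 y.2.1 y.2.2 := by
      rintro ⟨s, a₁, o₁⟩ - hy
      simp only [g] at hy
      split_ifs at hy with hao
      · obtain ⟨rfl, rfl⟩ := Prod.ext_iff.mp hao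
        have hpos : M.prSO s a₁ s' o₁ ≠ 0 := fun h0 => hy (by rw [h0, mul_zero, zero_div])
        exact ((M.prSO_nonneg s a₁ s' o₁).lt_of_ne hpos.symm).trans_le (M.prSO_le_prO s a₁ s' o₁)
      · exact absurd rfl hy
    calc ∑ i, M.canonicalWeight b a o i * (M.member b₀ i).val s'
        = ∑ x : {x : S × A × O // 0 < M.prO x.1 x.2.1 x.2.2}, g x.1 := by
          rw [Fintype.sum_option]
          simp only [hterm]
          simp only [canonicalWeight, zero_mul, zero_add]
      _ = ∑ y, g y := by
          rw [← Finset.sum_filter_of_ne hsupp]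
          exact (Finset.sum_subtype _ Finset.mem_filter_univ g).symm
      _ = (M.post b a o h).val s' := by
          simp only [g, Fintype.sum_prod_type, Finset.sum_ite_eq', Finset.mem_univ, if_true]
          simp only [post, bprSO, Finset.sum_div]

end POMDP

/-- If `Q` is convex in the belief then `H_POMDP Q ≤ H_OTIB Q` pointwise. -/
theorem HPOMDP_le_HOTIB {S A O : Type*} [Fintype S] [Fintype A] [Fintype O]
    [Nonempty S] [Nonempty A] [Nonempty O] (M : POMDP S A O) (b₀ : Belief S)
    (Q : Belief S → A → ℝ) (hQ : ConvexInBelief Q) (b : Belief S) (a : A) :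
    M.HPOMDP Q b a ≤ M.HOTIB b₀ Q b a := by
  unfold POMDP.HPOMDP POMDP.HOTIB
  have hγ := M.γ_pos.le
  gcongr with o
  split_ifs with h
  · obtain ⟨a', -, ha'⟩ := Finset.exists_mem_eq_sup' Finset.univ_nonempty
      (fun a' => Q (M.post b a o h) a')
    rw [ha']
    refine le_trans ?_ (Finset.le_sup' _ (Finset.mem_univ a'))
    have : Nonempty {w // M.IsWeight b₀ (M.post b a o h) w} :=
      ⟨⟨_, M.isWeight_canonicalWeight b₀ h⟩⟩
    gcongr
    exact le_ciInf fun w => ConvexInBelief.le_sum_mul hQ a' (fun i _ => w.2.1 i) w.2.2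
  · exact le_rfl
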